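/- Hölder-type second-moment bound for increments of the scaled Gaussian input. Assume σ satisfies L1 and L2. Then for every T > 0 there exist constants K > 0, γ ∈ (0,1) and x̄ > 0 such that for every x ∈ (0, x̄] and all s₁, t₁, s₂, t₂ ∈ [−T, T]: E[ ( (J(x t₁) − J(x s₁))/σ(x) − (J(x t₂) − J(x s₂))/σ(x) )² ] ≤ K ( |s₁ − s₂|² + |t₁ − t₂|² )^{γ}. -/

import Mathlib

open MeasureTheory ProbabilityTheory Filter Topology

noncomputable section

/-- Covariance function of a centered Gaussian process with stationary increments
and standard deviation function `σ`:
`Cov(J(t), J(s)) = (σ²(|t|) + σ²(|s|) − σ²(|t−s|))/2`. -/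
def covFromStd (σ : ℝ → ℝ) : ℝ → ℝ → ℝ := fun t s =>
  (σ |t| ^ 2 + σ |s| ^ 2 - σ |t - s| ^ 2) / 2

/-- `X` is a real-valued centered Gaussian process (indexed by `ℝ`) with covariance
function `K`, under the measure `P`: every finite linear combination of its values is a
centered Gaussian real random variable with the variance prescribed by `K`. -/
def IsCenteredGaussian1 {Ω : Type*} [MeasurableSpace Ω] (P : Measure Ω)
    (X : ℝ → Ω → ℝ) (K : ℝ → ℝ → ℝ) : Prop :=
  (∀ t, Measurable (X t)) ∧
  ∀ (k : ℕ) (t : Fin k → ℝ) (c : Fin k → ℝ),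
    P.map (fun ω => ∑ a, c a * X (t a) ω)
      = gaussianReal 0 (∑ a, ∑ b, c a * c b * K (t a) (t b)).toNNReal

/-! Stationarity of the increments gives `E[(J p - J q)²] = σ(|p - q|)²`, so by
`(a - b)² ≤ 2a² + 2b²` the second moment is at most
`2 (σ(x|t₁ - t₂|)² + σ(x|s₁ - s₂|)²) / σ(x)²`, and what remains is the Potter bound
`σ(ux) ≤ K σ(x) u^(λ/2)` for small `x` and `u ∈ (0, 2T]`.

With `g(y) = log σ(e^{-y}) + λ y`, L1 says `g(y + v) - g(y) → 0` for each fixed `v`.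
For large `N` the closed set of shifts `w ∈ [0, 2]` with `|g(y + w) - g(y)| ≤ ε/2` for all
`y ≥ N` has measure more than `3/2`, so every `v ∈ [0, 1]` is a difference of two such shifts.
This makes the convergence uniform in `v ∈ [0, 1]`, hence `|g(z) - g(y)| ≤ ε (|z - y| + 1)`
for `y, z ≥ N`, which exponentiates to the Potter bound. -/

open Set Real

lemma integral_sq_sub_le {Ω : Type*} [MeasurableSpace Ω] {P : Measure Ω} {f g : Ω → ℝ}
    (hf : Integrable (fun ω => f ω ^ 2) P) (hg : Integrable (fun ω => g ω ^ 2) P) :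
    ∫ ω, (f ω - g ω) ^ 2 ∂P ≤ 2 * ∫ ω, f ω ^ 2 ∂P + 2 * ∫ ω, g ω ^ 2 ∂P := by
  rw [← integral_const_mul, ← integral_const_mul, ← integral_add (hf.const_mul 2) (hg.const_mul 2)]
  exact integral_mono_of_nonneg (.of_forall fun ω => sq_nonneg _)
    ((hf.const_mul 2).add (hg.const_mul 2))
    (.of_forall fun ω => by nlinarith [sq_nonneg (f ω + g ω)])

lemma integrable_sq_gaussianReal (v : NNReal) :
    Integrable (fun x : ℝ => x ^ 2) (gaussianReal 0 v) :=
  (memLp_id_gaussianReal 2).integrable_sq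

lemma integral_sq_gaussianReal (v : NNReal) :
    ∫ x, x ^ 2 ∂gaussianReal 0 v = v := by
  rw [← variance_fun_id_gaussianReal (μ := 0),
    variance_of_integral_eq_zero aemeasurable_id' integral_id_gaussianReal]

namespace IsCenteredGaussian1

variable {Ω : Type*} [MeasurableSpace Ω] {P : Measure Ω} {X : ℝ → Ω → ℝ} {K : ℝ → ℝ → ℝ}

lemma integrable_sq_sum (hX : IsCenteredGaussian1 P X K) {k : ℕ} (t c : Fin k → ℝ) :
    Integrable (fun ω => (∑ a, c a * X (t a) ω) ^ 2) P := by
  have hY : Measurable fun ω => ∑ a, c a * X (t a) ω :=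
    Finset.measurable_sum _ fun a _ => (hX.1 (t a)).const_mul (c a)
  refine (integrable_map_measure (g := fun x : ℝ => x ^ 2) (by fun_prop) hY.aemeasurable).mp ?_
  rw [hX.2 k t c]
  exact integrable_sq_gaussianReal _

lemma integral_sq_sum (hX : IsCenteredGaussian1 P X K) {k : ℕ} (t c : Fin k → ℝ) :
    ∫ ω, (∑ a, c a * X (t a) ω) ^ 2 ∂P = (∑ a, ∑ b, c a * c b * K (t a) (t b)).toNNReal := by
  have hY : Measurable fun ω => ∑ a, c a * X (t a) ω :=
    Finset.measurable_sum _ fun a _ => (hX.1 (t a)).const_mul (c a)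
  rw [← integral_map (f := fun x : ℝ => x ^ 2) hY.aemeasurable (by fun_prop), hX.2 k t c,
    integral_sq_gaussianReal]

lemma integrable_sq_sub (hX : IsCenteredGaussian1 P X K) (p q : ℝ) :
    Integrable (fun ω => (X p ω - X q ω) ^ 2) P := by
  simpa [Fin.sum_univ_two, sub_eq_add_neg] using hX.integrable_sq_sum ![p, q] ![1, -1]

lemma integral_sq_sub {σ : ℝ → ℝ} (hX : IsCenteredGaussian1 P X (covFromStd σ)) (hσ0 : σ 0 = 0)
    (p q : ℝ) : ∫ ω, (X p ω - X q ω) ^ 2 ∂P = σ |p - q| ^ 2 := by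
  have h := hX.integral_sq_sum ![p, q] ![1, -1]
  have hquad : (1 : ℝ) * 1 * covFromStd σ p p + 1 * -1 * covFromStd σ p q
      + (-1 * 1 * covFromStd σ q p + -1 * -1 * covFromStd σ q q) = σ |p - q| ^ 2 := by
    simp only [covFromStd, sub_self, abs_zero, hσ0, abs_sub_comm q p]
    ring
  simp only [Fin.sum_univ_two, Matrix.cons_val_zero, Matrix.cons_val_one] at h
  rwa [hquad, Real.coe_toNNReal _ (sq_nonneg _),
    show (fun ω => (1 * X p ω + -1 * X q ω) ^ 2) = fun ω => (X p ω - X q ω) ^ 2 by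
      ext; ring] at h

lemma integral_sq_sub_sub_le {σ : ℝ → ℝ} (hX : IsCenteredGaussian1 P X (covFromStd σ))
    (hσ0 : σ 0 = 0) (p₁ q₁ p₂ q₂ : ℝ) :
    ∫ ω, ((X p₁ ω - X q₁ ω) - (X p₂ ω - X q₂ ω)) ^ 2 ∂P
      ≤ 2 * σ |p₁ - p₂| ^ 2 + 2 * σ |q₁ - q₂| ^ 2 := by
  simp_rw [sub_sub_sub_comm _ (X q₁ _)]
  have := integral_sq_sub_le (hX.integrable_sq_sub p₁ p₂) (hX.integrable_sq_sub q₁ q₂)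
  rwa [hX.integral_sq_sub hσ0, hX.integral_sq_sub hσ0] at this

end IsCenteredGaussian1

lemma exists_mem_sub_mem_of_lt_volume_add {E : Set ℝ} {L v : ℝ} (hE : MeasurableSet E)
    (hEL : E ⊆ Icc 0 L) (hv : 0 ≤ v) (hvol : ENNReal.ofReal (L + v) < volume E + volume E) :
    ∃ w ∈ E, w - v ∈ E := by
  have hshift : MeasurableSet ((· + -v) ⁻¹' E) := measurable_add_const (-v) hE
  have hsub : (· + -v) ⁻¹' E ⊆ Icc 0 (L + v) := fun w hw => by
    have := hEL hw
    simp only [mem_Icc] at this ⊢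
    constructor <;> linarith
  obtain ⟨w, hwE, hwvE⟩ := nonempty_inter_of_measure_lt_add volume hshift
    (hEL.trans (Icc_subset_Icc_right (by linarith))) hsub
    (by rwa [measure_preimage_add_right, Real.volume_Icc, sub_zero])
  exact ⟨w, hwE, by simpa [sub_eq_add_neg] using hwvE⟩

lemma exists_forall_abs_sub_le_of_tendsto {h : ℝ → ℝ} (hc : Continuous h)
    (hlim : ∀ v, Tendsto (fun y => h (y + v) - h y) atTop (𝓝 0)) {ε : ℝ} (hε : 0 < ε) :
    ∃ N, ∀ y ≥ N, ∀ v ∈ Icc (0 : ℝ) 1, |h (y + v) - h y| ≤ ε := by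
  set E : ℝ → Set ℝ := fun N => {w ∈ Icc 0 2 | ∀ y ≥ N, |h (y + w) - h y| ≤ ε / 2}
  have hE_closed (N : ℝ) : IsClosed (E N) := by
    simp only [E, ofPred_and, ofPred_forall]
    exact isClosed_Icc.inter <| isClosed_iInter fun y => isClosed_iInter fun _ =>
      isClosed_le (by fun_prop) continuous_const
  have hE_mono : Monotone E := fun N N' hN w hw =>
    ⟨hw.1, fun y hy => hw.2 y (hN.trans hy)⟩
  have hE_iUnion : ⋃ N, E N = Icc 0 2 := by
    refine subset_antisymm (iUnion_subset fun N w hw => hw.1) fun w hw => ?_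
    obtain ⟨N, hN⟩ := eventually_atTop.mp <|
      (hlim w).eventually (Metric.closedBall_mem_nhds 0 (half_pos hε))
    exact mem_iUnion.mpr ⟨N, hw, fun y hy => by simpa using hN y hy⟩
  obtain ⟨N, hN⟩ : ∃ N, ENNReal.ofReal (3 / 2) < volume (E N) := by
    have := tendsto_measure_iUnion_atTop (μ := volume) hE_mono
    rw [hE_iUnion, Real.volume_Icc] at this
    exact (this.eventually_const_lt (by norm_num)).exists
  refine ⟨N, fun y hy v hv => ?_⟩
  obtain ⟨w, hw, hwv⟩ := exists_mem_sub_mem_of_lt_volume_add (hE_closed N).measurableSet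
    (fun w hw => hw.1) hv.1 (by
      calc ENNReal.ofReal (2 + v) ≤ ENNReal.ofReal (3 / 2) + ENNReal.ofReal (3 / 2) := by
            rw [← ENNReal.ofReal_add (by norm_num) (by norm_num)]
            exact ENNReal.ofReal_le_ofReal (by linarith [hv.2])
        _ < volume (E N) + volume (E N) := ENNReal.add_lt_add hN hN)
  have h₁ := hw.2 y hy
  have h₂ := hwv.2 (y + v) (by linarith [hv.1])
  rw [add_add_sub_cancel] at h₂
  calc |h (y + v) - h y| = |(h (y + w) - h y) - (h (y + w) - h (y + v))| := by ring_nf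
    _ ≤ |h (y + w) - h y| + |h (y + w) - h (y + v)| := abs_sub _ _
    _ ≤ ε := by linarith

lemma abs_sub_le_of_forall_Icc {h : ℝ → ℝ} {N ε : ℝ} (hε : 0 ≤ ε)
    (H : ∀ y ≥ N, ∀ v ∈ Icc (0 : ℝ) 1, |h (y + v) - h y| ≤ ε) :
    ∀ y ≥ N, ∀ z ≥ N, |h z - h y| ≤ ε * (|z - y| + 1) := by
  have step : ∀ n : ℕ, ∀ y ≥ N, ∀ v ∈ Icc (0 : ℝ) n, |h (y + v) - h y| ≤ ε * n := by
    intro n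
    induction n with
    | zero =>
      intro y _ v hv
      obtain rfl : v = 0 := by simpa using hv
      simp
    | succ n ih =>
      intro y hy v hv
      push_cast at hv ⊢
      rcases le_or_gt v 1 with hv1 | hv1
      · have := H y hy v ⟨hv.1, hv1⟩
        nlinarith [n.cast_nonneg (α := ℝ)]
      · have h₁ := ih (y + 1) (by linarith) (v - 1) ⟨by linarith, by linarith [hv.2]⟩
        have h₂ := H y hy 1 ⟨zero_le_one, le_rfl⟩
        rw [add_add_sub_cancel] at h₁
        calc |h (y + v) - h y| = |(h (y + v) - h (y + 1)) + (h (y + 1) - h y)| := by ring_nf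
          _ ≤ |h (y + v) - h (y + 1)| + |h (y + 1) - h y| := abs_add_le _ _
          _ ≤ ε * (n + 1) := by linarith
  intro y hy z hz
  wlog hyz : y ≤ z generalizing y z
  · rw [abs_sub_comm, abs_sub_comm z]
    exact this z hz y hy (by linarith)
  have hv : 0 ≤ z - y := sub_nonneg.mpr hyz
  calc |h z - h y| = |h (y + (z - y)) - h y| := by rw [add_sub_cancel]
    _ ≤ ε * ⌈z - y⌉₊ := step _ y hy _ ⟨hv, Nat.le_ceil _⟩
    _ ≤ ε * (|z - y| + 1) := by
      rw [abs_of_nonneg hv]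
      exact mul_le_mul_of_nonneg_left (Nat.ceil_lt_add_one hv).le hε

lemma tendsto_log_comp_exp_neg_add_sub {f : ℝ → ℝ} (hpos : ∀ t > 0, 0 < f t) {lam : ℝ}
    (hf : ∀ t > 0, Tendsto (fun x => f (t * x) / f x) (𝓝[>] 0) (𝓝 (t ^ lam))) (v : ℝ) :
    Tendsto (fun y => (log (f (exp (-(y + v)))) + lam * (y + v))
      - (log (f (exp (-y))) + lam * y)) atTop (𝓝 0) := by
  have hexp : Tendsto (fun y : ℝ => exp (-y)) atTop (𝓝[>] 0) :=
    tendsto_nhdsWithin_of_tendsto_nhds_of_eventually_within _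
      (tendsto_exp_atBot.comp tendsto_neg_atTop_atBot) (.of_forall fun y => exp_pos _)
  have hlog := ((continuousAt_log (rpow_pos_of_pos (exp_pos (-v)) lam).ne').tendsto.comp
    ((hf _ (exp_pos (-v))).comp hexp)).add_const (lam * v)
  rw [log_rpow (exp_pos _), log_exp, mul_neg, neg_add_cancel] at hlog
  refine hlog.congr fun y => ?_
  simp only [Function.comp_apply, ← exp_add, neg_add_rev, add_comm (-v)]
  rw [log_div (hpos _ (exp_pos _)).ne' (hpos _ (exp_pos _)).ne']
  ring

theorem exists_le_mul_rpow_of_tendsto_div {f : ℝ → ℝ} (hcont : ContinuousOn f (Ioi 0))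
    (hpos : ∀ t > 0, 0 < f t) {lam γ : ℝ}
    (hf : ∀ t > 0, Tendsto (fun x => f (t * x) / f x) (𝓝[>] 0) (𝓝 (t ^ lam)))
    (hγ : γ < lam) (U : ℝ) :
    ∃ K > 0, ∃ xb > 0, ∀ x ∈ Ioc 0 xb, ∀ u ∈ Ioc 0 U, f (u * x) ≤ K * f x * u ^ γ := by
  set g : ℝ → ℝ := fun y => log (f (exp (-y))) + lam * y
  have hg : Continuous g :=
    ((hcont.comp_continuous (by fun_prop) fun y => exp_pos (-y)).log
      fun y => (hpos _ (exp_pos _)).ne').add (by fun_prop)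
  have hδ : 0 < lam - γ := sub_pos.mpr hγ
  obtain ⟨N, hN⟩ := exists_forall_abs_sub_le_of_tendsto hg
    (tendsto_log_comp_exp_neg_add_sub hpos hf) hδ
  have hgrowth := abs_sub_le_of_forall_Icc hδ.le hN
  set M := max 0 (log U)
  refine ⟨exp ((lam - γ) * (1 + 2 * M)), exp_pos _, exp (-(N + M)), exp_pos _,
    fun x hx u hu => ?_⟩
  have hux : 0 < u * x := mul_pos hu.1 hx.1
  have hy : N + M ≤ -log x := by
    have := log_le_log hx.1 hx.2
    rw [log_exp] at this
    linarith
  have hv : log u ≤ M := (log_le_log hu.1 hu.2).trans (le_max_right _ _)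
  have hgx : g (-log x) = log (f x) - lam * log x := by
    simp only [g, neg_neg, exp_log hx.1]; ring
  have hgux : g (-log x - log u) = log (f (u * x)) - lam * (log u + log x) := by
    have hexp : exp (-(-log x - log u)) = u * x := by
      rw [neg_sub, sub_neg_eq_add, exp_add, exp_log hu.1, exp_log hx.1]
    simp only [g, hexp]; ring
  have key := hgrowth (-log x) (by linarith [le_max_left 0 (log U)]) (-log x - log u)
    (by linarith [le_max_left 0 (log U)])
  rw [hgx, hgux, sub_sub_cancel_left, abs_neg] at key
  have habs : |log u| ≤ 2 * M - log u := by
    rw [abs_le]; constructor <;> linarith [le_max_left 0 (log U)]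
  have hfx := hpos x hx.1
  have hu_pow := rpow_pos_of_pos hu.1 γ
  rw [← log_le_log_iff (hpos _ hux) (by positivity),
    log_mul (mul_pos (exp_pos _) hfx).ne' hu_pow.ne',
    log_mul (exp_pos _).ne' hfx.ne', log_exp, log_rpow hu.1]
  nlinarith [(abs_le.mp key).2]

lemma sq_le_of_le_mul_rpow {f : ℝ → ℝ} (hf0 : f 0 = 0) (hpos : ∀ t > 0, 0 < f t)
    {K γ xb U : ℝ}
    (hbound : ∀ x ∈ Ioc 0 xb, ∀ u ∈ Ioc 0 U, f (u * x) ≤ K * f x * u ^ γ)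
    {x a : ℝ} (hx : x ∈ Ioc 0 xb) (ha : |a| ≤ U) :
    f |x * a| ^ 2 ≤ K ^ 2 * f x ^ 2 * (|a| ^ 2) ^ γ := by
  rw [abs_mul, abs_of_pos hx.1, mul_comm x]
  rcases (abs_nonneg a).eq_or_lt with ha0 | ha0
  · rw [← ha0, zero_mul, hf0, zero_pow two_ne_zero]
    positivity
  · calc f (|a| * x) ^ 2 ≤ (K * f x * |a| ^ γ) ^ 2 :=
          pow_le_pow_left₀ (hpos _ (mul_pos ha0 hx.1)).le (hbound x hx _ ⟨ha0, ha⟩) 2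
      _ = K ^ 2 * f x ^ 2 * (|a| ^ 2) ^ γ := by
        rw [mul_pow, mul_pow, rpow_pow_comm (abs_nonneg _)]

theorem holder_second_moment_bound_general
    {Ω : Type*} [MeasurableSpace Ω] (P : Measure Ω)
    (σ : ℝ → ℝ) (hσcont : ContinuousOn σ (Set.Ici 0)) (hσ0 : σ 0 = 0)
    (hσpos : ∀ t > (0:ℝ), 0 < σ t)
    (J : ℝ → Ω → ℝ)
    (hJgauss : IsCenteredGaussian1 P J (covFromStd σ))
    -- assumption L1
    (lam : ℝ) (hlam : lam ∈ Set.Ioo (0:ℝ) 1)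
    (hL1 : ∀ t > (0:ℝ), Tendsto (fun x => σ (t * x) / σ x) (𝓝[>] 0) (𝓝 (t ^ lam))) :
    ∀ T > (0:ℝ), ∃ K γ xbar : ℝ, 0 < K ∧ γ ∈ Set.Ioo (0:ℝ) 1 ∧ 0 < xbar ∧
      ∀ x, 0 < x → x ≤ xbar →
        ∀ s₁ ∈ Set.Icc (-T) T, ∀ t₁ ∈ Set.Icc (-T) T,
          ∀ s₂ ∈ Set.Icc (-T) T, ∀ t₂ ∈ Set.Icc (-T) T,
            ∫ ω, ((J (x * t₁) ω - J (x * s₁) ω) / σ x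
                - (J (x * t₂) ω - J (x * s₂) ω) / σ x) ^ 2 ∂P
              ≤ K * (|s₁ - s₂| ^ 2 + |t₁ - t₂| ^ 2) ^ γ := by
  intro T _
  have hγ : 0 < lam / 2 := half_pos hlam.1
  obtain ⟨K, hK, xbar, hxbar, hpotter⟩ := exists_le_mul_rpow_of_tendsto_div
    (hσcont.mono Ioi_subset_Ici_self) hσpos hL1 (half_lt_self hlam.1) (2 * T)
  refine ⟨4 * K ^ 2, lam / 2, xbar, by positivity, ⟨hγ, by linarith [hlam.2]⟩,
    hxbar, fun x hx hxle s₁ hs₁ t₁ ht₁ s₂ hs₂ t₂ ht₂ => ?_⟩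
  have hσx := hσpos x hx
  have hincr {a b : ℝ} (ha : a ∈ Icc (-T) T) (hb : b ∈ Icc (-T) T) :
      σ |x * a - x * b| ^ 2 ≤ K ^ 2 * σ x ^ 2 * (|a - b| ^ 2) ^ (lam / 2) := by
    rw [← mul_sub]
    refine sq_le_of_le_mul_rpow hσ0 hσpos hpotter ⟨hx, hxle⟩ ?_
    linarith [abs_sub a b, abs_le.mpr ha, abs_le.mpr hb]
  have hs : (|s₁ - s₂| ^ 2) ^ (lam / 2) ≤ (|s₁ - s₂| ^ 2 + |t₁ - t₂| ^ 2) ^ (lam / 2) :=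
    rpow_le_rpow (by positivity) (le_add_of_nonneg_right (by positivity)) hγ.le
  have ht : (|t₁ - t₂| ^ 2) ^ (lam / 2) ≤ (|s₁ - s₂| ^ 2 + |t₁ - t₂| ^ 2) ^ (lam / 2) :=
    rpow_le_rpow (by positivity) (le_add_of_nonneg_left (by positivity)) hγ.le
  simp_rw [← sub_div, div_pow]
  rw [integral_div, div_le_iff₀ (by positivity)]
  calc _ ≤ 2 * σ |x * t₁ - x * t₂| ^ 2 + 2 * σ |x * s₁ - x * s₂| ^ 2 :=
        hJgauss.integral_sq_sub_sub_le hσ0 _ _ _ _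
    _ ≤ 2 * (K ^ 2 * σ x ^ 2 * (|t₁ - t₂| ^ 2) ^ (lam / 2))
          + 2 * (K ^ 2 * σ x ^ 2 * (|s₁ - s₂| ^ 2) ^ (lam / 2)) := by
        gcongr <;> exact hincr ‹_› ‹_›
    _ ≤ 2 * (K ^ 2 * σ x ^ 2 * (|s₁ - s₂| ^ 2 + |t₁ - t₂| ^ 2) ^ (lam / 2))
          + 2 * (K ^ 2 * σ x ^ 2 * (|s₁ - s₂| ^ 2 + |t₁ - t₂| ^ 2) ^ (lam / 2)) := by
        gcongr
    _ = 4 * K ^ 2 * (|s₁ - s₂| ^ 2 + |t₁ - t₂| ^ 2) ^ (lam / 2) * σ x ^ 2 := by ring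

/-- **Hölder-type second-moment bound for increments of the scaled Gaussian input.**
Under L1 and L2, for every `T > 0` there exist `K > 0`, `γ ∈ (0,1)` and `x̄ > 0` such
that for all `x ∈ (0, x̄]` and `s₁, t₁, s₂, t₂ ∈ [−T,T]`:
`E[((J(xt₁) − J(xs₁))/σ(x) − (J(xt₂) − J(xs₂))/σ(x))²]
  ≤ K (|s₁−s₂|² + |t₁−t₂|²)^γ`. -/
theorem holder_second_moment_bound
    {Ω : Type*} [MeasurableSpace Ω] (P : Measure Ω) [IsProbabilityMeasure P]
    (σ : ℝ → ℝ) (hσcont : ContinuousOn σ (Set.Ici 0)) (hσ0 : σ 0 = 0)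
    (hσpos : ∀ t > (0:ℝ), 0 < σ t)
    (J : ℝ → Ω → ℝ) (hJcont : ∀ ω, Continuous fun t => J t ω)
    (hJ0 : ∀ ω, J 0 ω = 0)
    (hJgauss : IsCenteredGaussian1 P J (covFromStd σ))
    -- assumption L1
    (lam : ℝ) (hlam : lam ∈ Set.Ioo (0:ℝ) 1)
    (hL1 : ∀ t > (0:ℝ), Tendsto (fun x => σ (t * x) / σ x) (𝓝[>] 0) (𝓝 (t ^ lam)))
    -- assumption L2
    (t₀ β C : ℝ) (ht₀ : 0 < t₀) (hβ : β ∈ Set.Ioo (0:ℝ) 1) (hC : 0 < C)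
    (hL2 : ∀ t > t₀, σ t ≤ C * t ^ β) :
    ∀ T > (0:ℝ), ∃ K γ xbar : ℝ, 0 < K ∧ γ ∈ Set.Ioo (0:ℝ) 1 ∧ 0 < xbar ∧
      ∀ x, 0 < x → x ≤ xbar →
        ∀ s₁ ∈ Set.Icc (-T) T, ∀ t₁ ∈ Set.Icc (-T) T,
          ∀ s₂ ∈ Set.Icc (-T) T, ∀ t₂ ∈ Set.Icc (-T) T,
            ∫ ω, ((J (x * t₁) ω - J (x * s₁) ω) / σ x
                - (J (x * t₂) ω - J (x * s₂) ω) / σ x) ^ 2 ∂P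
              ≤ K * (|s₁ - s₂| ^ 2 + |t₁ - t₂| ^ 2) ^ γ :=
  holder_second_moment_bound_general P σ hσcont hσ0 hσpos J hJgauss lam hlam hL1
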